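/- Let p be an odd prime and l an odd prime with l | p - 1. Let M = (ℤ/(p-1)ℤ)[G] for a finite group G, N = ℤ/((p-1)/2)ℤ, and I = ker(Tr : M → N) where Tr is the coefficient-sum map. Then I/lI is isomorphic as an 𝔽_l[G]-module to B_l = {Σ x_g [g] ∈ 𝔽_l[G] : Σ x_g = 0}. -/

import Mathlib

/-- The augmentation (coefficient-sum) ring homomorphism on a group algebra. -/
noncomputable def aug (k : Type*) (G : Type*) [CommRing k] [Monoid G] :
    MonoidAlgebra k G →+* k :=
  ((MonoidAlgebra.lift k k G) 1).toRingHom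

/-- The trace map `Tr : (ℤ/mℤ)[G] → ℤ/kℤ` (for `k ∣ m`) sending `Σ a_g [g]` to
`Σ a_g mod k`. -/
noncomputable def trMap (G : Type*) [Monoid G] (m k : ℕ) (h : k ∣ m) :
    MonoidAlgebra (ZMod m) G →+* ZMod k :=
  (ZMod.castHom h (ZMod k)).comp (aug (ZMod m) G)

/-- `I = ker(Tr : (ℤ/(p-1)ℤ)[G] → ℤ/((p-1)/2)ℤ)`. -/
noncomputable def IId (G : Type*) [Group G] (p : ℕ) (h : (p - 1) / 2 ∣ p - 1) :
    Ideal (MonoidAlgebra (ZMod (p - 1)) G) :=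
  RingHom.ker (trMap G (p - 1) ((p - 1) / 2) h)

/-- The quotient module `I/lI`. -/
noncomputable abbrev IQuot (G : Type*) [Group G] (p l : ℕ) (h : (p - 1) / 2 ∣ p - 1) :=
  (IId G p h) ⧸ LinearMap.range
    ((l : Module.End (MonoidAlgebra (ZMod (p - 1)) G) (IId G p h)))

section aux

lemma aug_single {k G : Type*} [CommRing k] [Monoid G] (g : G) (a : k) :
    aug k G (MonoidAlgebra.single g a) = a := by
  simp [aug, MonoidAlgebra.lift_single]

/-- Coefficientwise reduction `(ZMod m)[G] → (ZMod l)[G]` as an additive hom. -/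
noncomputable def redHom (G : Type*) [Group G] {m l : ℕ} (hdvd : l ∣ m) :
    MonoidAlgebra (ZMod m) G →+ MonoidAlgebra (ZMod l) G :=
  { toFun := MonoidAlgebra.map (ZMod.castHom hdvd (ZMod l)).toAddMonoidHom
    map_zero' := MonoidAlgebra.map_zero _
    map_add' := MonoidAlgebra.map_add _ }

lemma redHom_single {G : Type*} [Group G] {m l : ℕ} (hdvd : l ∣ m) (g : G) (a : ZMod m) :
    redHom G hdvd (MonoidAlgebra.single g a) =
      MonoidAlgebra.single g (ZMod.castHom hdvd (ZMod l) a) := by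
  exact MonoidAlgebra.map_single _ _ _

lemma redHom_apply {G : Type*} [Group G] {m l : ℕ} (hdvd : l ∣ m)
    (x : MonoidAlgebra (ZMod m) G) (g : G) :
    (redHom G hdvd x).coeff g = ZMod.castHom hdvd (ZMod l) (x.coeff g) := rfl

lemma aug_redHom {G : Type*} [Group G] {m l : ℕ} (hdvd : l ∣ m)
    (x : MonoidAlgebra (ZMod m) G) :
    aug (ZMod l) G (redHom G hdvd x) = ZMod.castHom hdvd (ZMod l) (aug (ZMod m) G x) := by
  induction x using MonoidAlgebra.induction_linear with
  | zero => simp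
  | add a b ha hb => simp [map_add, ha, hb]
  | single g a =>
      rw [redHom_single, aug_single, aug_single]

lemma redHom_of_mul {G : Type*} [Group G] {m l : ℕ} (hdvd : l ∣ m) (g : G)
    (x : MonoidAlgebra (ZMod m) G) :
    redHom G hdvd (MonoidAlgebra.of (ZMod m) G g * x) =
      MonoidAlgebra.of (ZMod l) G g * redHom G hdvd x := by
  induction x using MonoidAlgebra.induction_linear with
  | zero => simp
  | add a b ha hb =>
      simp only [MonoidAlgebra.of_apply] at ha hb ⊢
      rw [mul_add, map_add, ha, hb, map_add, mul_add]
  | single g' a =>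
      rw [MonoidAlgebra.of_apply, MonoidAlgebra.single_mul_single, redHom_single,
        redHom_single, MonoidAlgebra.of_apply, MonoidAlgebra.single_mul_single, one_mul, one_mul]

lemma zmod_cast_eq_zero_iff {m l : ℕ} [NeZero m] (hdvd : l ∣ m) (a : ZMod m) :
    ZMod.castHom hdvd (ZMod l) a = 0 ↔ l ∣ a.val := by
  rw [ZMod.castHom_apply, ← ZMod.natCast_val, ZMod.natCast_eq_zero_iff]

lemma zmod_div_lemma {m l : ℕ} [NeZero m] (a : ZMod m) (hla : l ∣ a.val) :
    (l : ZMod m) * ((a.val / l : ℕ) : ZMod m) = a := by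
  rw [← Nat.cast_mul, Nat.mul_div_cancel' hla, ZMod.natCast_val, ZMod.cast_id]

lemma exists_c {m k l : ℕ} [NeZero m] [NeZero k] (hl : l.Prime) (hlodd : l ≠ 2)
    (hmk : m = 2 * k) (hlk : l ∣ k) (hk : k ∣ m) (t : ZMod k)
    (ht : (l : ZMod k) * t = 0) :
    ∃ c : ZMod m, (l : ZMod m) * c = 0 ∧ ZMod.castHom hk (ZMod k) c = t := by
  obtain ⟨k', hk'⟩ := hlk
  have hl0 : 0 < l := hl.pos
  have hlt : k ∣ l * t.val := by
    have h0 : ((l * t.val : ℕ) : ZMod k) = 0 := by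
      push_cast
      rw [ZMod.natCast_val, ZMod.cast_id]
      exact ht
    exact (ZMod.natCast_eq_zero_iff _ _).mp h0
  have hk't : k' ∣ t.val := by
    have h1 : l * k' ∣ l * t.val := hk' ▸ hlt
    exact (Nat.mul_dvd_mul_iff_left hl0).mp h1
  set s := t.val / k' with hs_def
  have hs : k' * s = t.val := Nat.mul_div_cancel' hk't
  have hlodd' : Odd l := hl.odd_of_ne_two hlodd
  have hl2 : 2 * ((l + 1) / 2) = l + 1 := by
    obtain ⟨j, hj⟩ := hlodd'
    omega
  have key : 2 * k' * (s * ((l + 1) / 2)) = k' * s + k * s := by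
    calc 2 * k' * (s * ((l + 1) / 2)) = k' * s * (2 * ((l + 1) / 2)) := by ring
    _ = k' * s * (l + 1) := by rw [hl2]
    _ = k' * s + l * k' * s := by ring
    _ = k' * s + k * s := by rw [← hk']
  refine ⟨((2 * k' * (s * ((l + 1) / 2)) : ℕ) : ZMod m), ?_, ?_⟩
  · rw [← Nat.cast_mul]
    exact (ZMod.natCast_eq_zero_iff _ _).mpr
      ⟨s * ((l + 1) / 2), by rw [hmk, hk']; ring⟩
  · rw [map_natCast, key]
    push_cast
    rw [ZMod.natCast_self, zero_mul, add_zero, ← Nat.cast_mul, hs,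
      ZMod.natCast_val, ZMod.cast_id]

end aux

/-- Let `p` be an odd prime and `l` an odd prime with `l ∣ p - 1`, `G` a finite group,
and `I = ker(Tr : (ℤ/(p-1)ℤ)[G] → ℤ/((p-1)/2)ℤ)` where `Tr` is the coefficient-sum map.
Then `I/lI` is isomorphic, as an `𝔽_l[G]`-module, to the trace-zero submodule
`B_l = ker(aug : 𝔽_l[G] → 𝔽_l)`. -/
theorem stmt8 {G : Type*} [Group G] [Fintype G] (p l : ℕ)
    (hp : p.Prime) (hpodd : Odd p) (hl : l.Prime) (hlodd : l ≠ 2) (hdvd : l ∣ p - 1)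
    (h : (p - 1) / 2 ∣ p - 1) :
    ∃ e : IQuot G p l h ≃+ RingHom.ker (aug (ZMod l) G),
      ∀ (g : G) (x : IQuot G p l h),
        e ((MonoidAlgebra.of (ZMod (p - 1)) G g) • x) =
          (MonoidAlgebra.of (ZMod l) G g) • e x := by
  classical
  have hpne2 : p ≠ 2 := by rintro rfl; simp [Nat.odd_iff] at hpodd
  have hp3 : 3 ≤ p := by have := hp.two_le; omega
  haveI : NeZero (p - 1) := ⟨by omega⟩
  have heven : 2 ∣ p - 1 := by rcases hpodd with ⟨j, hj⟩; omega
  have hmk : p - 1 = 2 * ((p - 1) / 2) := by omega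
  haveI : NeZero ((p - 1) / 2) := ⟨by omega⟩
  haveI : NeZero l := ⟨hl.pos.ne'⟩
  have hlk : l ∣ (p - 1) / 2 := by
    rcases (Nat.Prime.dvd_mul hl).mp (hmk ▸ hdvd) with h2 | hk
    · exact absurd ((Nat.prime_dvd_prime_iff_eq hl Nat.prime_two).mp h2) hlodd
    · exact hk
  have memI : ∀ x : MonoidAlgebra (ZMod (p - 1)) G, x ∈ IId G p h ↔
      ZMod.castHom h (ZMod ((p - 1) / 2)) (aug (ZMod (p - 1)) G x) = 0 := by
    intro x
    rw [IId, RingHom.mem_ker, trMap, RingHom.comp_apply]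
  have hIk : ∀ a : ZMod (p - 1), ZMod.castHom h (ZMod ((p - 1) / 2)) a = 0 →
      ZMod.castHom hdvd (ZMod l) a = 0 := by
    intro a ha
    rw [zmod_cast_eq_zero_iff] at ha ⊢
    exact dvd_trans hlk ha
  have hfm : ∀ x : IId G p h,
      redHom G hdvd (x : MonoidAlgebra (ZMod (p - 1)) G) ∈ RingHom.ker (aug (ZMod l) G) := by
    intro x
    rw [RingHom.mem_ker, aug_redHom]
    exact hIk _ ((memI _).mp x.2)
  let f : (IId G p h) →+ RingHom.ker (aug (ZMod l) G) :=
    { toFun := fun x => ⟨redHom G hdvd ↑x, hfm x⟩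
      map_zero' := Subtype.ext (by simp)
      map_add' := fun a b => Subtype.ext (by simp) }
  have hf_apply : ∀ x : IId G p h, (f x : MonoidAlgebra (ZMod l) G) = redHom G hdvd ↑x :=
    fun _ => rfl
  -- surjectivity of the reduction map
  have castsurj : Function.Surjective (ZMod.castHom hdvd (ZMod l)) := by
    intro b
    exact ⟨(b.val : ZMod (p - 1)), by rw [map_natCast, ZMod.natCast_val, ZMod.cast_id]⟩
  have hredsurj : Function.Surjective (redHom G hdvd :
      MonoidAlgebra (ZMod (p - 1)) G →+ MonoidAlgebra (ZMod l) G) := by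
    intro y
    obtain ⟨x, hx⟩ := Finsupp.mapRange_surjective (ZMod.castHom hdvd (ZMod l)) (map_zero _)
      castsurj y.coeff
    exact ⟨MonoidAlgebra.ofCoeff x, MonoidAlgebra.coeff_injective hx⟩
  have hfsurj : Function.Surjective f := by
    rintro ⟨y, hy⟩
    rw [RingHom.mem_ker] at hy
    obtain ⟨x₀, hx₀⟩ := hredsurj y
    have hcast0 : ZMod.castHom hdvd (ZMod l) (aug (ZMod (p - 1)) G x₀) = 0 := by
      have h1 := aug_redHom hdvd x₀
      rw [hx₀, hy] at h1
      exact h1.symm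
    refine ⟨⟨x₀ - MonoidAlgebra.single 1 (aug (ZMod (p - 1)) G x₀), ?_⟩, ?_⟩
    · rw [memI, map_sub, aug_single, sub_self, map_zero]
    · apply Subtype.ext
      rw [hf_apply]
      show redHom G hdvd (x₀ - MonoidAlgebra.single 1 (aug (ZMod (p - 1)) G x₀)) = y
      rw [map_sub, hx₀, redHom_single, hcast0]
      simp
  -- kernel of f is l • I
  have hker : ∀ x : IId G p h, redHom G hdvd (x : MonoidAlgebra (ZMod (p - 1)) G) = 0 ↔
      x ∈ LinearMap.range
        ((l : Module.End (MonoidAlgebra (ZMod (p - 1)) G) (IId G p h))) := by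
    intro x
    constructor
    · intro hx0
      have hcoef : ∀ g : G, l ∣ ((x : MonoidAlgebra (ZMod (p - 1)) G).coeff g).val := by
        intro g
        have h2 : ZMod.castHom hdvd (ZMod l) ((x : MonoidAlgebra (ZMod (p - 1)) G).coeff g) = 0 := by
          rw [← redHom_apply hdvd _ g, hx0]; rfl
        exact (zmod_cast_eq_zero_iff hdvd _).mp h2
      have hd0 : ((((0 : ZMod (p - 1)).val / l : ℕ)) : ZMod (p - 1)) = 0 := by
        simp [ZMod.val_zero]
      set z0 : MonoidAlgebra (ZMod (p - 1)) G :=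
        MonoidAlgebra.ofCoeff (Finsupp.mapRange
          (fun a : ZMod (p - 1) => ((a.val / l : ℕ) : ZMod (p - 1))) hd0
          (x : MonoidAlgebra (ZMod (p - 1)) G).coeff) with hz0
      have hlz0 : (l : ZMod (p - 1)) • z0 = (x : MonoidAlgebra (ZMod (p - 1)) G) := by
        ext g
        rw [MonoidAlgebra.coeff_smul, Finsupp.smul_apply, hz0, MonoidAlgebra.coeff_ofCoeff,
          Finsupp.mapRange_apply, smul_eq_mul]
        exact zmod_div_lemma _ (hcoef g)
      have haugx : aug (ZMod (p - 1)) G (x : MonoidAlgebra (ZMod (p - 1)) G)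
          = (l : ZMod (p - 1)) * aug (ZMod (p - 1)) G z0 := by
        rw [← hlz0]
        have h3 := map_smul ((MonoidAlgebra.lift (ZMod (p - 1)) (ZMod (p - 1)) G) 1)
          (l : ZMod (p - 1)) z0
        rw [smul_eq_mul] at h3
        exact h3
      have ht : (l : ZMod ((p - 1) / 2)) *
          (ZMod.castHom h (ZMod ((p - 1) / 2)) (aug (ZMod (p - 1)) G z0)) = 0 := by
        have h4 := (memI _).mp x.2
        rw [haugx, map_mul, map_natCast] at h4
        exact h4
      obtain ⟨c, hc1, hc2⟩ := exists_c hl hlodd hmk hlk h _ ht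
      have hzI : z0 - MonoidAlgebra.single 1 c ∈ IId G p h := by
        rw [memI, map_sub, aug_single, map_sub, hc2, sub_self]
      refine ⟨⟨z0 - MonoidAlgebra.single 1 c, hzI⟩, ?_⟩
      apply Subtype.ext
      have h5 : (((l : Module.End (MonoidAlgebra (ZMod (p - 1)) G) (IId G p h))
          ⟨z0 - MonoidAlgebra.single 1 c, hzI⟩ : IId G p h) :
            MonoidAlgebra (ZMod (p - 1)) G)
          = l • (z0 - MonoidAlgebra.single 1 c) := by
        rw [Module.End.natCast_apply]
        rfl
      rw [h5, ← Nat.cast_smul_eq_nsmul (ZMod (p - 1)), smul_sub, hlz0, MonoidAlgebra.smul_single,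
        smul_eq_mul, hc1, MonoidAlgebra.single_zero, sub_zero]
    · rintro ⟨w, rfl⟩
      have h6 : (((l : Module.End (MonoidAlgebra (ZMod (p - 1)) G) (IId G p h)) w : IId G p h) :
          MonoidAlgebra (ZMod (p - 1)) G) = l • (w : MonoidAlgebra (ZMod (p - 1)) G) := by
        rw [Module.End.natCast_apply]
        rfl
      rw [h6, map_nsmul, ← Nat.cast_smul_eq_nsmul (ZMod l), ZMod.natCast_self, zero_smul]
  -- assemble
  set N := LinearMap.range
    ((l : Module.End (MonoidAlgebra (ZMod (p - 1)) G) (IId G p h))) with hN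
  let fZ := f.toIntLinearMap
  have hkerZ : LinearMap.ker fZ = N.restrictScalars ℤ := by
    ext x
    rw [LinearMap.mem_ker, Submodule.restrictScalars_mem]
    constructor
    · intro hx
      refine (hker x).mp ?_
      have := Subtype.ext_iff.mp (show f x = 0 from hx)
      simpa [hf_apply] using this
    · intro hx
      show f x = 0
      refine Subtype.ext ?_
      rw [hf_apply, (hker x).mpr hx]
      rfl
  let q := Submodule.liftQ (N.restrictScalars ℤ) fZ (le_of_eq hkerZ.symm)
  have hqinj : Function.Injective q := by
    rw [← LinearMap.ker_eq_bot]
    exact Submodule.ker_liftQ_eq_bot _ _ _ (le_of_eq hkerZ)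
  have hqsurj : Function.Surjective q := by
    intro y
    obtain ⟨x, hx⟩ := hfsurj y
    exact ⟨Submodule.Quotient.mk x, by rw [Submodule.liftQ_apply]; exact hx⟩
  let e0 := LinearEquiv.ofBijective q ⟨hqinj, hqsurj⟩
  let rs := Submodule.Quotient.restrictScalarsEquiv ℤ N
  refine ⟨(rs.symm.toAddEquiv.trans e0.toAddEquiv), ?_⟩
  have he : ∀ w : IId G p h,
      (rs.symm.toAddEquiv.trans e0.toAddEquiv) (Submodule.Quotient.mk w) = f w := by
    intro w
    show e0 (rs.symm (Submodule.Quotient.mk w)) = f w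
    rw [show rs.symm (Submodule.Quotient.mk w) = Submodule.Quotient.mk w from
      Submodule.Quotient.restrictScalarsEquiv_symm_mk ℤ N w]
    show q (Submodule.Quotient.mk w) = f w
    rw [Submodule.liftQ_apply]
    rfl
  intro g x
  obtain ⟨w, rfl⟩ := Submodule.Quotient.mk_surjective N x
  rw [← Submodule.Quotient.mk_smul, he, he]
  apply Subtype.ext
  rw [SetLike.val_smul, smul_eq_mul, hf_apply, hf_apply]
  rw [show ((MonoidAlgebra.of (ZMod (p - 1)) G g • w : IId G p h) :
      MonoidAlgebra (ZMod (p - 1)) G)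
    = MonoidAlgebra.of (ZMod (p - 1)) G g * (w : MonoidAlgebra (ZMod (p - 1)) G) from rfl]
  exact redHom_of_mul hdvd g _
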